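/- Let a > 0 and 0 < S_min ≤ S_max (allowing S_max = ∞) be real numbers such that for all x ∈ [S_min, S_max], one has (|a − arcsinh(x)| / (√(1+x²)·(√(1+x²) − 1)²)) · max{1, x, 2x(√(1+x²) − 1)} < α₀. Then for every g ∈ (0,1) and every real L with S_min ≤ L + a·g ≤ S_max, the starter S̃ = L + a·g is an approximate zero of f_{g,L}. -/

import Mathlib

noncomputable section

/-- The hyperbolic Kepler function `f_{g,L}(S) = S - g·arcsinh(S) - L`. -/
def fhk (g L : ℝ) : ℝ → ℝ := fun S => S - g * Real.arsinh S - L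

/-- `β(f,z) = |f(z)/f'(z)|`. -/
def betaFn (f : ℝ → ℝ) (z : ℝ) : ℝ := |f z / deriv f z|

/-- `γ(f,z) = sup_{k ≥ 2} |f^{(k)}(z)/(k!·f'(z))|^{1/(k-1)}`. -/
def gammaFn (f : ℝ → ℝ) (z : ℝ) : ℝ :=
  sSup {y : ℝ | ∃ k : ℕ, 2 ≤ k ∧
    y = |iteratedDeriv k f z / (Nat.factorial k * deriv f z)| ^ ((1 : ℝ) / ((k : ℝ) - 1))}

/-- `α(f,z) = β(f,z)·γ(f,z)`. -/
def alphaFn (f : ℝ → ℝ) (z : ℝ) : ℝ := betaFn f z * gammaFn f z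

/-- Smale's constant (improved by Wang–Han): `α₀ = 3 - 2√2`. -/
def alpha0 : ℝ := 3 - 2 * Real.sqrt 2

/-- `z` is an approximate zero of `f` when `α(f,z) < α₀`. -/
def ApproxZero (f : ℝ → ℝ) (z : ℝ) : Prop := alphaFn f z < alpha0

/-!
At the starter `S = L + a g` one has `f(S) = g (a - arsinh S)` and `f'(S) = 1 - g / s` with
`s = √(1 + S²)`, while `f⁽ᵏ⁾ = -g · D^(k-1) (1 + x²)^(-1/2)` for `k ≥ 2`. Writing
`(1 + x²)^(-1/2) = (x + i)^(-1/2) (x - i)^(-1/2)`, the Leibniz rule bounds its `n`-th derivative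
by `s^(-1-n) ∑ C(n,i) |(-1/2)_i| |(-1/2)_(n-i)|` with falling factorials `(r)_i`; all products
`(-1/2)_i (-1/2)_(n-i)` have the sign `(-1)^n`, so Chu–Vandermonde sums this to `|(-1)_n| = n!`.
Hence `γ ≤ max(1, g / (2 (s - g))) / s`, and with `g < 1 < s` the product `β γ` is at most the
left-hand side of the hypothesis at `x = S`.
-/

open Polynomial Finset Complex ComplexConjugate Real

theorem descPochhammer_smeval_eq_eval {R : Type*} [Ring R] (r : R) (n : ℕ) :
    (descPochhammer ℤ n).smeval r = (descPochhammer R n).eval r := by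
  rw [← aeval_eq_smeval, aeval_def, eval₂_eq_eval_map, descPochhammer_map]

theorem descPochhammer_eval_neg_one {R : Type*} [Ring R] (n : ℕ) :
    (descPochhammer R n).eval (-1) = (-1) ^ n * n.factorial := by
  have := ascPochhammer_eval_neg_eq_descPochhammer R (-1 : R) n
  rw [neg_neg, ascPochhammer_eval_one] at this
  rw [this, ← mul_assoc, ← pow_add, Even.neg_one_pow ⟨n, rfl⟩, one_mul]

theorem abs_descPochhammer_eval_neg {r : ℝ} (hr : 0 < r) (n : ℕ) :
    |(descPochhammer ℝ n).eval (-r)| = (-1) ^ n * (descPochhammer ℝ n).eval (-r) := by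
  have h := ascPochhammer_eval_neg_eq_descPochhammer ℝ (-r) n
  rw [neg_neg] at h
  rw [← h, ← abs_of_pos (ascPochhammer_pos n r hr), h, abs_mul, abs_neg_one_pow, one_mul]

theorem sum_choose_mul_abs_descPochhammer_eval_neg {r s : ℝ} (hr : 0 < r) (hs : 0 < s)
    (n : ℕ) :
    ∑ i ∈ range (n + 1), (n.choose i : ℝ) * |(descPochhammer ℝ i).eval (-r)|
      * |(descPochhammer ℝ (n - i)).eval (-s)| = |(descPochhammer ℝ n).eval (-(r + s))| := by
  have hvdm := Ring.descPochhammer_smeval_add (r := -r) (s := -s) n (Commute.all _ _)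
  rw [Nat.sum_antidiagonal_eq_sum_range_succ (fun i j => (n.choose i : ℝ) *
      ((descPochhammer ℤ i).smeval (-r) * (descPochhammer ℤ j).smeval (-s)))] at hvdm
  simp only [descPochhammer_smeval_eq_eval] at hvdm
  have hsign : ∀ i ∈ range (n + 1), (n.choose i : ℝ) * |(descPochhammer ℝ i).eval (-r)|
      * |(descPochhammer ℝ (n - i)).eval (-s)| = (-1) ^ n * ((n.choose i : ℝ) *
        ((descPochhammer ℝ i).eval (-r) * (descPochhammer ℝ (n - i)).eval (-s))) := by
    intro i hi
    rw [abs_descPochhammer_eval_neg hr, abs_descPochhammer_eval_neg hs,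
      ← pow_mul_pow_sub (-1 : ℝ) (Nat.le_of_lt_succ (mem_range.1 hi))]
    ring
  rw [sum_congr rfl hsign, ← mul_sum, ← hvdm, ← neg_add,
    abs_descPochhammer_eval_neg (by positivity)]

theorem descPochhammer_eval_ofReal (r : ℝ) (n : ℕ) :
    (descPochhammer ℂ n).eval (r : ℂ) = (((descPochhammer ℝ n).eval r : ℝ) : ℂ) := by
  rw [← descPochhammer_map ofRealHom, eval_map, ← ofRealHom_eq_coe, eval₂_at_apply,
    ofRealHom_eq_coe]

section OfRealAddCpow

variable {w : ℂ}

theorem ofReal_add_mem_slitPlane (hw : w.im ≠ 0) (x : ℝ) : (x : ℂ) + w ∈ slitPlane :=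
  mem_slitPlane_iff.2 (Or.inr (by simpa using hw))

theorem hasDerivAt_ofReal_add_cpow (hw : w.im ≠ 0) (c : ℂ) (x : ℝ) :
    HasDerivAt (fun y : ℝ => ((y : ℂ) + w) ^ c) (c * ((x : ℂ) + w) ^ (c - 1)) x := by
  have h := (hasStrictDerivAt_cpow_const (c := c) (ofReal_add_mem_slitPlane hw x)).hasDerivAt
  simpa using (h.comp (x : ℂ) ((hasDerivAt_id _).add_const w)).comp_ofReal

theorem contDiff_ofReal_add_cpow (hw : w.im ≠ 0) (c : ℂ) {n : WithTop ℕ∞} :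
    ContDiff ℝ n (fun y : ℝ => ((y : ℂ) + w) ^ c) := by
  refine contDiff_iff_contDiffAt.2 fun x => ?_
  have h : AnalyticAt ℂ (fun z : ℂ => (z + w) ^ c) (x : ℂ) :=
    (analyticAt_id.add analyticAt_const).cpow analyticAt_const (ofReal_add_mem_slitPlane hw x)
  exact (h.contDiffAt.restrict_scalars ℝ).comp x ofRealCLM.contDiff.contDiffAt

theorem iteratedDeriv_ofReal_add_cpow (hw : w.im ≠ 0) (c : ℂ) (n : ℕ) :
    iteratedDeriv n (fun y : ℝ => ((y : ℂ) + w) ^ c) =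
      fun x : ℝ => (descPochhammer ℂ n).eval c * ((x : ℂ) + w) ^ (c - n) := by
  induction n with
  | zero => simp
  | succ n ih =>
    funext x
    rw [iteratedDeriv_succ, ih]
    refine ((hasDerivAt_ofReal_add_cpow hw (c - n) x).const_mul _).deriv.trans ?_
    rw [descPochhammer_succ_eval]
    push_cast
    ring_nf

theorem norm_iteratedDeriv_ofReal_add_cpow (hw : w.im ≠ 0) (r : ℝ) (n : ℕ) (x : ℝ) :
    ‖iteratedDeriv n (fun y : ℝ => ((y : ℂ) + w) ^ (r : ℂ)) x‖ =
      |(descPochhammer ℝ n).eval r| * ‖(x : ℂ) + w‖ ^ (r - n) := by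
  rw [iteratedDeriv_ofReal_add_cpow hw, norm_mul, descPochhammer_eval_ofReal, norm_real,
    Real.norm_eq_abs, ← ofReal_natCast, ← ofReal_sub, norm_cpow_real]

end OfRealAddCpow

theorem cpow_ofReal_mul_conj_cpow_ofReal {z : ℂ} (hz : z.arg ≠ π) (r : ℝ) :
    z ^ (r : ℂ) * conj z ^ (r : ℂ) = ((‖z‖ ^ (2 * r) : ℝ) : ℂ) := by
  rw [conj_cpow _ _ hz, conj_ofReal, mul_conj, normSq_eq_norm_sq, norm_cpow_real,
    ← Real.rpow_natCast, ← Real.rpow_mul (norm_nonneg z)]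
  push_cast
  ring_nf

theorem norm_ofReal_add_I (x : ℝ) : ‖(x : ℂ) + I‖ = √(1 + x ^ 2) := by
  simpa [add_comm] using norm_add_mul_I x 1

theorem norm_ofReal_sub_I (x : ℝ) : ‖(x : ℂ) - I‖ = √(1 + x ^ 2) := by
  simpa [add_comm, sub_eq_add_neg] using norm_add_mul_I x (-1)

theorem ofReal_inv_sqrt_one_add_sq (x : ℝ) :
    (((√(1 + x ^ 2))⁻¹ : ℝ) : ℂ) =
      ((x : ℂ) + I) ^ ((-(1 / 2) : ℝ) : ℂ) * ((x : ℂ) + -I) ^ ((-(1 / 2) : ℝ) : ℂ) := by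
  have hconj : (x : ℂ) + -I = conj ((x : ℂ) + I) := by simp
  have harg : ((x : ℂ) + I).arg ≠ π := fun h => by
    simpa using (arg_eq_pi_iff.1 h).2
  rw [hconj, cpow_ofReal_mul_conj_cpow_ofReal harg, norm_ofReal_add_I,
    show 2 * (-(1 / 2) : ℝ) = -1 by norm_num, Real.rpow_neg_one]

theorem norm_iteratedFDeriv_mul_ofReal_add_cpow_le {w₁ w₂ : ℂ} (hw₁ : w₁.im ≠ 0)
    (hw₂ : w₂.im ≠ 0) (r₁ r₂ : ℝ) (n : ℕ) (x : ℝ) :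
    ‖iteratedFDeriv ℝ n (fun y : ℝ =>
        ((y : ℂ) + w₁) ^ (r₁ : ℂ) * ((y : ℂ) + w₂) ^ (r₂ : ℂ)) x‖ ≤
      ∑ i ∈ range (n + 1), (n.choose i : ℝ)
        * (|(descPochhammer ℝ i).eval r₁| * ‖(x : ℂ) + w₁‖ ^ (r₁ - i))
        * (|(descPochhammer ℝ (n - i)).eval r₂|
          * ‖(x : ℂ) + w₂‖ ^ (r₂ - (n - i : ℕ))) := by
  refine (norm_iteratedFDeriv_mul_le (contDiff_ofReal_add_cpow hw₁ _)
    (contDiff_ofReal_add_cpow hw₂ _) x le_rfl).trans_eq (sum_congr rfl fun i _ => ?_)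
  rw [norm_iteratedFDeriv_eq_norm_iteratedDeriv, norm_iteratedFDeriv_eq_norm_iteratedDeriv,
    norm_iteratedDeriv_ofReal_add_cpow hw₁, norm_iteratedDeriv_ofReal_add_cpow hw₂]

theorem abs_iteratedDeriv_inv_sqrt_one_add_sq_le (n : ℕ) (x : ℝ) :
    |iteratedDeriv n (fun y => (√(1 + y ^ 2))⁻¹) x| ≤
      n.factorial / √(1 + x ^ 2) ^ (n + 1) := by
  set s := √(1 + x ^ 2)
  have hs : 0 < s := by positivity
  have hsmooth : ContDiff ℝ n (fun y : ℝ => (√(1 + y ^ 2))⁻¹) :=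
    ((contDiff_const.add (contDiff_id.pow 2)).sqrt fun y => by positivity).inv
      fun y => by positivity
  have hfactor : ofRealLI ∘ (fun y : ℝ => (√(1 + y ^ 2))⁻¹) = fun y : ℝ =>
      ((y : ℂ) + I) ^ ((-(1 / 2) : ℝ) : ℂ) * ((y : ℂ) + -I) ^ ((-(1 / 2) : ℝ) : ℂ) :=
    funext ofReal_inv_sqrt_one_add_sq
  have hpow : ∀ i ∈ range (n + 1),
      s ^ (-(1 / 2) - (i : ℝ)) * s ^ (-(1 / 2) - ((n - i : ℕ) : ℝ)) = (s ^ (n + 1))⁻¹ := by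
    intro i hi
    rw [← Real.rpow_add hs, ← Real.rpow_natCast, ← Real.rpow_neg hs.le,
      Nat.cast_sub (Nat.le_of_lt_succ (mem_range.1 hi))]
    push_cast
    ring_nf
  calc |iteratedDeriv n (fun y => (√(1 + y ^ 2))⁻¹) x|
      = ‖iteratedFDeriv ℝ n (ofRealLI ∘ (fun y : ℝ => (√(1 + y ^ 2))⁻¹)) x‖ := by
        rw [ofRealLI.norm_iteratedFDeriv_comp_left hsmooth.contDiffAt le_rfl,
          norm_iteratedFDeriv_eq_norm_iteratedDeriv, Real.norm_eq_abs]
    _ ≤ _ := hfactor ▸ norm_iteratedFDeriv_mul_ofReal_add_cpow_le (by simp) (by simp) _ _ n x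
    _ = ∑ i ∈ range (n + 1), (n.choose i : ℝ) * |(descPochhammer ℝ i).eval (-(1 / 2))|
          * |(descPochhammer ℝ (n - i)).eval (-(1 / 2))| * (s ^ (n + 1))⁻¹ := by
        refine sum_congr rfl fun i hi => ?_
        rw [norm_ofReal_add_I, ← sub_eq_add_neg, norm_ofReal_sub_I, ← hpow i hi]
        ring
    _ = n.factorial / s ^ (n + 1) := by
        rw [← sum_mul, sum_choose_mul_abs_descPochhammer_eval_neg one_half_pos one_half_pos,
          add_halves, descPochhammer_eval_neg_one, abs_mul, abs_neg_one_pow, one_mul,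
          Nat.abs_cast, div_eq_mul_inv]

theorem rpow_one_div_mul_pow_le {c t : ℝ} (hc : 0 ≤ c) (ht : 0 ≤ t) {j : ℕ} (hj : j ≠ 0) :
    (c * t ^ j) ^ ((1 : ℝ) / j) ≤ max 1 c * t := by
  have hj' : (0 : ℝ) < j := by positivity
  rw [Real.mul_rpow hc (by positivity), ← Real.rpow_natCast, ← Real.rpow_mul ht,
    mul_one_div_cancel hj'.ne', Real.rpow_one]
  refine mul_le_mul_of_nonneg_right ?_ ht
  rcases le_total c 1 with hc1 | hc1
  · exact (Real.rpow_le_one hc hc1 (by positivity)).trans (le_max_left _ _)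
  · refine le_trans ?_ (le_max_right _ _)
    calc c ^ ((1 : ℝ) / j) ≤ c ^ (1 : ℝ) :=
          Real.rpow_le_rpow_of_exponent_le hc1
            ((div_le_one hj').2 (Nat.one_le_cast.2 (Nat.one_le_iff_ne_zero.2 hj)))
      _ = c := Real.rpow_one c

theorem gammaFn_le {f : ℝ → ℝ} {z C t : ℝ} (hC : 0 ≤ C) (ht : 0 ≤ t)
    (hf : ∀ j : ℕ,
      |iteratedDeriv (j + 2) f z / ((j + 2).factorial * deriv f z)| ≤ C * t ^ (j + 1)) :
    gammaFn f z ≤ max 1 C * t := by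
  refine Real.sSup_le ?_ (mul_nonneg (zero_le_one.trans (le_max_left _ _)) ht)
  rintro y ⟨k, hk, rfl⟩
  obtain ⟨j, rfl⟩ := Nat.exists_eq_add_of_le' hk
  have hexp : ((j + 2 : ℕ) : ℝ) - 1 = ((j + 1 : ℕ) : ℝ) := by push_cast; ring
  rw [hexp]
  exact (Real.rpow_le_rpow (abs_nonneg _) (hf j) (by positivity)).trans
    (rpow_one_div_mul_pow_le hC ht j.succ_ne_zero)

theorem deriv_fhk (g L : ℝ) : deriv (fhk g L) = fun x => 1 - g * (√(1 + x ^ 2))⁻¹ := by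
  funext x
  exact (((hasDerivAt_id x).sub ((hasDerivAt_arsinh x).const_mul g)).sub_const L).deriv

theorem iteratedDeriv_fhk (g L : ℝ) (n : ℕ) (x : ℝ) :
    iteratedDeriv (n + 2) (fhk g L) x =
      -(g * iteratedDeriv (n + 1) (fun y => (√(1 + y ^ 2))⁻¹) x) := by
  rw [iteratedDeriv_succ', deriv_fhk, iteratedDeriv_const_sub n.succ_pos, Pi.neg_def,
    iteratedDeriv_fun_neg, iteratedDeriv_const_mul_field]

theorem gammaFn_fhk_le {g : ℝ} (L : ℝ) {x : ℝ} (hg : 0 < g) (hgs : g < √(1 + x ^ 2)) :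
    gammaFn (fhk g L) x ≤ max 1 (g / (2 * (√(1 + x ^ 2) - g))) * (√(1 + x ^ 2))⁻¹ := by
  set s := √(1 + x ^ 2)
  have hs : 0 < s := by positivity
  have hsg : 0 < s - g := sub_pos.2 hgs
  refine gammaFn_le (by positivity) (by positivity) fun j => ?_
  have hderiv : deriv (fhk g L) x = (s - g) / s := by
    rw [deriv_fhk]
    show 1 - g * s⁻¹ = (s - g) / s
    field_simp
  have hfact : ((j + 2).factorial : ℝ) = (j + 2) * (j + 1).factorial := by
    push_cast [Nat.factorial_succ]
    ring
  have hnum : |iteratedDeriv (j + 2) (fhk g L) x| ≤ g * ((j + 1).factorial / s ^ (j + 2)) := by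
    rw [iteratedDeriv_fhk, abs_neg, abs_mul, abs_of_pos hg]
    exact mul_le_mul_of_nonneg_left (abs_iteratedDeriv_inv_sqrt_one_add_sq_le (j + 1) x) hg.le
  calc |iteratedDeriv (j + 2) (fhk g L) x / ((j + 2).factorial * deriv (fhk g L) x)|
      ≤ g * ((j + 1).factorial / s ^ (j + 2)) / ((j + 2).factorial * ((s - g) / s)) := by
        rw [abs_div, hderiv,
          abs_of_pos (by positivity : (0 : ℝ) < (j + 2).factorial * ((s - g) / s))]
        exact div_le_div_of_nonneg_right hnum (by positivity)
    _ = g / ((j + 2) * (s - g)) * s⁻¹ ^ (j + 1) := by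
        rw [hfact, inv_pow]
        field_simp
        ring
    _ ≤ g / (2 * (s - g)) * s⁻¹ ^ (j + 1) := by
        gcongr
        linarith

theorem sqrt_one_add_sq_mul_sub_one_le {x : ℝ} (hx : 0 ≤ x) :
    √(1 + x ^ 2) * (√(1 + x ^ 2) - 1) ≤ max 1 (max x (2 * x * (√(1 + x ^ 2) - 1))) := by
  set s := √(1 + x ^ 2)
  have hs2 : s ^ 2 = 1 + x ^ 2 := Real.sq_sqrt (by positivity)
  have hs1 : 1 ≤ s := Real.one_le_sqrt.2 (by nlinarith)
  have hs : s ≤ 1 + x := by nlinarith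
  rcases le_total x 1 with hx1 | hx1
  · exact le_max_of_le_left (by nlinarith)
  · exact le_max_of_le_right (le_max_of_le_right (by nlinarith))

theorem sqrt_one_add_sq_le_two_mul_max {x : ℝ} (hx : 0 ≤ x) :
    √(1 + x ^ 2) ≤ 2 * max 1 (max x (2 * x * (√(1 + x ^ 2) - 1))) := by
  have hs2 : √(1 + x ^ 2) ^ 2 = 1 + x ^ 2 := Real.sq_sqrt (by positivity)
  have hs : √(1 + x ^ 2) ≤ 1 + x := by nlinarith [Real.sqrt_nonneg (1 + x ^ 2)]
  have h1 := le_max_left 1 (max x (2 * x * (√(1 + x ^ 2) - 1)))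
  have h2 : x ≤ max 1 (max x (2 * x * (√(1 + x ^ 2) - 1))) :=
    le_max_of_le_right (le_max_left _ _)
  linarith

theorem div_sub_mul_max_le_of_lt_one {g x : ℝ} (hg0 : 0 < g) (hg1 : g < 1) (hx : 0 < x) :
    g / (√(1 + x ^ 2) - g) * max 1 (g / (2 * (√(1 + x ^ 2) - g))) ≤
      max 1 (max x (2 * x * (√(1 + x ^ 2) - 1))) /
        (√(1 + x ^ 2) * (√(1 + x ^ 2) - 1) ^ 2) := by
  have hM1 := sqrt_one_add_sq_mul_sub_one_le hx.le
  have hM2 := sqrt_one_add_sq_le_two_mul_max hx.le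
  set s := √(1 + x ^ 2)
  set M := max 1 (max x (2 * x * (s - 1)))
  have hs1 : 1 < s := Real.lt_sqrt_of_sq_lt (by nlinarith)
  have hsg : g / (s - g) ≤ 1 / (s - 1) := by
    rw [div_le_div_iff₀ (by linarith) (by linarith)]
    nlinarith
  have hsg2 : g / (2 * (s - g)) ≤ 1 / (2 * (s - 1)) := by
    rw [div_le_div_iff₀ (by linarith) (by linarith)]
    nlinarith
  calc g / (s - g) * max 1 (g / (2 * (s - g)))
      ≤ 1 / (s - 1) * max 1 (1 / (2 * (s - 1))) :=
        mul_le_mul hsg (max_le_max le_rfl hsg2) (by positivity) (by positivity)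
    _ = max (s * (s - 1)) (s / 2) / (s * (s - 1) ^ 2) := by
        rw [mul_max_of_nonneg _ _ (by positivity), ← max_div_div_right (by positivity)]
        congr 1 <;> field_simp
    _ ≤ M / (s * (s - 1) ^ 2) :=
        div_le_div_of_nonneg_right (max_le hM1 (by linarith)) (by positivity)

theorem alphaFn_fhk_le {g : ℝ} (L : ℝ) {x : ℝ} (hg0 : 0 < g) (hg1 : g < 1) (hx : 0 < x) :
    alphaFn (fhk g L) x ≤ |fhk g L x| / g / (√(1 + x ^ 2) * (√(1 + x ^ 2) - 1) ^ 2) *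
      max 1 (max x (2 * x * (√(1 + x ^ 2) - 1))) := by
  have hfactor := div_sub_mul_max_le_of_lt_one hg0 hg1 hx
  set s := √(1 + x ^ 2)
  have hs1 : 1 < s := Real.lt_sqrt_of_sq_lt (by nlinarith)
  have hsg : 0 < s - g := by linarith
  have hbeta : betaFn (fhk g L) x = |fhk g L x| * s / (s - g) := by
    rw [betaFn, deriv_fhk, abs_div]
    show |fhk g L x| / |1 - g * s⁻¹| = _
    rw [show 1 - g * s⁻¹ = (s - g) / s by field_simp, abs_of_pos (div_pos hsg (by linarith))]
    field_simp
  calc alphaFn (fhk g L) x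
      ≤ betaFn (fhk g L) x * (max 1 (g / (2 * (s - g))) * s⁻¹) :=
        mul_le_mul_of_nonneg_left (gammaFn_fhk_le L hg0 (by linarith)) (abs_nonneg _)
    _ = |fhk g L x| / g * (g / (s - g) * max 1 (g / (2 * (s - g)))) := by
        rw [hbeta]
        field_simp
    _ ≤ |fhk g L x| / g * (max 1 (max x (2 * x * (s - 1))) / (s * (s - 1) ^ 2)) :=
        mul_le_mul_of_nonneg_left hfactor (div_nonneg (abs_nonneg _) hg0.le)
    _ = _ := by ring

theorem linear_starter_is_approx_zero_general (a Smin : ℝ) (Smax : EReal)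
    (hmin : 0 < Smin)
    (hineq : ∀ x : ℝ, Smin ≤ x → (x : EReal) ≤ Smax →
      |a - Real.arsinh x| /
          (Real.sqrt (1 + x ^ 2) * (Real.sqrt (1 + x ^ 2) - 1) ^ 2) *
          max 1 (max x (2 * x * (Real.sqrt (1 + x ^ 2) - 1))) < alpha0)
    (g L : ℝ) (hg0 : 0 < g) (hg1 : g < 1)
    (h1 : Smin ≤ L + a * g) (h2 : ((L + a * g : ℝ) : EReal) ≤ Smax) :
    ApproxZero (fhk g L) (L + a * g) := by
  have hvalue : |fhk g L (L + a * g)| / g = |a - arsinh (L + a * g)| := by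
    rw [show fhk g L (L + a * g) = g * (a - arsinh (L + a * g)) by unfold fhk; ring, abs_mul,
      abs_of_pos hg0, mul_div_cancel_left₀ _ hg0.ne']
  calc alphaFn (fhk g L) (L + a * g)
      ≤ _ := alphaFn_fhk_le L hg0 hg1 (hmin.trans_le h1)
    _ < alpha0 := by
        rw [hvalue]
        exact hineq _ h1 h2

/-- Theorem 2.5: let `a > 0` and `0 < S_min ≤ S_max` (with `S_max = ∞` allowed,
modelled in `EReal`) be such that
`(|a - arcsinh(x)|/(√(1+x²)(√(1+x²)-1)²))·max{1, x, 2x(√(1+x²)-1)} < α₀`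
for all `x ∈ [S_min, S_max]`.  Then for every `g ∈ (0,1)` and `L` with
`S_min ≤ L + a·g ≤ S_max`, the starter `S̃ = L + a·g` is an approximate zero
of `f_{g,L}`. -/
theorem linear_starter_is_approx_zero (a Smin : ℝ) (Smax : EReal)
    (ha : 0 < a) (hmin : 0 < Smin) (hminmax : (Smin : EReal) ≤ Smax)
    (hineq : ∀ x : ℝ, Smin ≤ x → (x : EReal) ≤ Smax →
      |a - Real.arsinh x| /
          (Real.sqrt (1 + x ^ 2) * (Real.sqrt (1 + x ^ 2) - 1) ^ 2) *
          max 1 (max x (2 * x * (Real.sqrt (1 + x ^ 2) - 1))) < alpha0)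
    (g L : ℝ) (hg0 : 0 < g) (hg1 : g < 1)
    (h1 : Smin ≤ L + a * g) (h2 : ((L + a * g : ℝ) : EReal) ≤ Smax) :
    ApproxZero (fhk g L) (L + a * g) :=
  linear_starter_is_approx_zero_general a Smin Smax hmin hineq g L hg0 hg1 h1 h2
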